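/- Fix p ≤ n, a p-element subset Y of [n], and w ∈ S_n with wW_p ≤ Y (i.e., {w_1,...,w_p} ≤ Y). Then the set {v ∈ S_n : vW_p = Y and w ≤ v in Bruhat order} is nonempty and contains a unique minimal element in the Bruhat order (Deodhar's minimal lift). -/

import Mathlib

/-!
A permutation `v` is determined by its flag of initial sets `v[i] = {v_1, …, v_i}`, and both
`v[p] = Y` and `w ≤ v` are conditions on each level separately: `v[i] ⊆ Y` for `i ≤ p`,
`Y ⊆ v[i]` for `p ≤ i`, and `w[i] ≤ v[i]` in the dominance order. Call such `i`-sets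
admissible.
By induction on `i`, the admissible `i`-sets have a least element `A_i`, and `A_{i+1}` is `A_i`
plus the smallest `y` keeping it admissible. Two facts drive the induction step. Every admissible
`(i+1)`-set `C` loses an element to an admissible `i`-set, so `C` has at most one more element
than `A_i` below any threshold. And if `C` has more elements than `A_i` below `a`, an exchange
argument produces an admissible extension of `A_i` by an element below `a`. The chain
`A_0 ⊂ A_1 ⊂ ⋯ ⊂ A_n` is then the flag of the minimal lift.
-/

/-- Dominance order on equal-cardinality finite sets in a linear order:
the i-th smallest element of `E` is at most the i-th smallest element of `F`. -/
def Dom {α : Type*} [LinearOrder α] (E F : Finset α) : Prop :=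
  List.Forall₂ (· ≤ ·) (Finset.sort E (· ≤ ·)) (Finset.sort F (· ≤ ·))

/-- The set `{w_1, ..., w_i}` of the first `i` values of a permutation `w` of `[n]`
in one-line notation. -/
def initSet {n : ℕ} (w : Equiv.Perm (Fin n)) (i : ℕ) : Finset (Fin n) :=
  (Finset.univ.filter (fun j : Fin n => (j : ℕ) < i)).image w

/-- The Bruhat order on permutations, via the tableau criterion. -/
def Bruhat {n : ℕ} (v w : Equiv.Perm (Fin n)) : Prop :=
  ∀ i ≤ n, Dom (initSet v i) (initSet w i)

open Finset

theorem List.forall₂_le_iff_countP_lt {α : Type*} [LinearOrder α] {l m : List α}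
    (hl : l.Pairwise (· ≤ ·)) (hm : m.Pairwise (· ≤ ·)) (hlen : l.length = m.length) :
    List.Forall₂ (· ≤ ·) l m ↔ ∀ a, m.countP (· < a) ≤ l.countP (· < a) := by
  induction l generalizing m with
  | nil => cases m <;> simp_all
  | cons x l ih =>
    obtain _ | ⟨y, m⟩ := m
    · simp at hlen
    rw [List.pairwise_cons] at hl hm
    simp only [List.forall₂_cons, List.countP_cons, decide_eq_true_eq,
      ih hl.2 hm.2 (by simpa using hlen)]
    constructor
    · rintro ⟨hxy, htail⟩ a
      have := htail a
      split_ifs <;> first | omega | exact absurd (hxy.trans_lt ‹_›) ‹_›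
    · intro h
      have hxy : x ≤ y := by
        by_contra! hyx
        have hl0 : l.countP (· < x) = 0 :=
          List.countP_eq_zero.2 fun z hz => by simpa using hl.1 z hz
        have := h x
        rw [hl0, if_pos hyx, if_neg (lt_irrefl x)] at this
        omega
      refine ⟨hxy, fun a => ?_⟩
      have := h a
      by_cases hya : y < a
      · simp_all [hxy.trans_lt hya]
      · have hm0 : m.countP (· < a) = 0 :=
          List.countP_eq_zero.2 fun z hz => by
            simpa using (le_of_not_gt hya).trans (hm.1 z hz)
        omega

theorem card_filter_lt_eq_countP_sort {α : Type*} [LinearOrder α] (E : Finset α) (a : α) :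
    #{x ∈ E | x < a} = (E.sort (· ≤ ·)).countP (· < a) := by
  rw [← Multiset.coe_countP, sort_eq, Multiset.countP_eq_card_filter]
  rfl

theorem dom_iff_card_filter_lt {α : Type*} [LinearOrder α] (E F : Finset α) :
    Dom E F ↔ #E = #F ∧ ∀ a, #{x ∈ F | x < a} ≤ #{x ∈ E | x < a} := by
  simp only [card_filter_lt_eq_countP_sort]
  rw [← length_sort (· ≤ ·), ← length_sort (α := α) (· ≤ ·) (s := F)]
  exact ⟨fun h => ⟨h.length_eq, (List.forall₂_le_iff_countP_lt (pairwise_sort _ _)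
      (pairwise_sort _ _) h.length_eq).1 h⟩,
    fun h => (List.forall₂_le_iff_countP_lt (pairwise_sort _ _) (pairwise_sort _ _) h.1).2 h.2⟩

theorem List.Forall₂.le_antisymm {α : Type*} [PartialOrder α] {l m : List α}
    (h : List.Forall₂ (· ≤ ·) l m) (h' : List.Forall₂ (· ≤ ·) m l) : l = m := by
  induction h with
  | nil => rfl
  | cons hxy _ ih =>
    rw [List.forall₂_cons] at h'
    rw [_root_.le_antisymm hxy h'.1, ih h'.2]

theorem dom_antisymm {α : Type*} [LinearOrder α] {E F : Finset α} (hEF : Dom E F)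
    (hFE : Dom F E) : E = F := by
  ext x
  rw [← mem_sort (· ≤ ·), hEF.le_antisymm hFE, mem_sort]

section CountBelow

variable {n : ℕ}

def countBelow (E : Finset (Fin n)) (a : ℕ) : ℕ := #{x ∈ E | x.val < a}

theorem countBelow_mono {E F : Finset (Fin n)} (h : E ⊆ F) (a : ℕ) :
    countBelow E a ≤ countBelow F a :=
  card_le_card (filter_subset_filter _ h)

theorem countBelow_eq_card (E : Finset (Fin n)) {a : ℕ} (h : n ≤ a) : countBelow E a = #E :=
  congrArg card (filter_true_of_mem fun x _ => x.isLt.trans_le h)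

theorem countBelow_insert {E : Finset (Fin n)} {y : Fin n} (hy : y ∉ E) (a : ℕ) :
    countBelow (insert y E) a = countBelow E a + if y.val < a then 1 else 0 := by
  unfold countBelow
  rw [filter_insert]
  split_ifs
  · rw [card_insert_of_notMem (by simp [hy])]
  · rfl

theorem countBelow_erase {E : Finset (Fin n)} {y : Fin n} (hy : y ∈ E) (a : ℕ) :
    countBelow E a = countBelow (E.erase y) a + if y.val < a then 1 else 0 := by
  rw [← countBelow_insert (notMem_erase y E), insert_erase hy]

theorem countBelow_le_add_card_sub {E F : Finset (Fin n)} (h : E ⊆ F) (a : ℕ) :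
    countBelow F a ≤ countBelow E a + (#F - #E) := by
  have hsplit : {x ∈ F | x.val < a} ⊆ {x ∈ E | x.val < a} ∪ (F \ E) := by
    intro x hx
    by_cases hxE : x ∈ E <;> simp_all
  have := (card_le_card hsplit).trans (card_union_le _ _)
  rw [card_sdiff_of_subset h] at this
  exact this

theorem exists_mem_sdiff_of_countBelow_lt {E F : Finset (Fin n)} {a : ℕ}
    (h : countBelow E a < countBelow F a) : ∃ x ∈ F, x ∉ E ∧ x.val < a := by
  by_contra! hc
  refine h.not_ge (card_le_card fun x hx => ?_)
  rw [mem_filter] at hx ⊢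
  exact ⟨by_contra fun hxE => (hc x hx.1 hxE).not_gt hx.2, hx.2⟩

theorem countBelow_add_card_Ico {E : Finset (Fin n)} {a b : ℕ} (hba : b ≤ a) :
    countBelow E b + #{x ∈ E | b ≤ x.val ∧ x.val < a} = countBelow E a := by
  rw [countBelow, countBelow, ← card_union_of_disjoint]
  · congr 1
    ext x
    simp only [mem_union, mem_filter]
    by_cases hx : x ∈ E
    · simp only [hx, true_and]
      omega
    · simp [hx]
  · exact disjoint_filter.2 fun x _ hx => by omega

theorem countBelow_add_le_of_forall_mem {A C : Finset (Fin n)} {a b : ℕ} (hba : b ≤ a)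
    (h : ∀ z ∈ C, b ≤ z.val → z.val < a → z ∈ A) :
    countBelow C a + countBelow A b ≤ countBelow A a + countBelow C b := by
  have hsub : {x ∈ C | b ≤ x.val ∧ x.val < a} ⊆ {x ∈ A | b ≤ x.val ∧ x.val < a} := by
    intro z hz
    rw [mem_filter] at hz ⊢
    exact ⟨h z hz.1 hz.2.1 hz.2.2, hz.2⟩
  have := card_le_card hsub
  rw [← countBelow_add_card_Ico (E := C) hba, ← countBelow_add_card_Ico (E := A) hba]
  omega

theorem exists_mem_sdiff_le_of_countBelow_le {A C : Finset (Fin n)} {b : ℕ} (hcard : #A < #C)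
    (hb : countBelow C b ≤ countBelow A b) : ∃ z ∈ C, z ∉ A ∧ b ≤ z.val := by
  by_contra! h
  have := countBelow_add_le_of_forall_mem (C := C) (A := A) (le_max_left b n)
    fun z hz hbz _ => by_contra fun hzA => (h z hz hzA).not_ge hbz
  rw [countBelow_eq_card _ (le_max_right b n), countBelow_eq_card _ (le_max_right b n)] at this
  omega

theorem exists_mem_sdiff_countBelow_insert_le {A Z F F' : Finset (Fin n)} (hAZ : A ⊆ Z)
    (hF : F' ⊆ F) (hZF : ∀ a, countBelow Z a ≤ countBelow F a)
    (hAF : ∀ a, countBelow A a ≤ countBelow F' a) (hcard : #F - #F' < #Z - #A) :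
    ∃ y ∈ Z \ A, ∀ b, countBelow (insert y A) b ≤ countBelow F' b := by
  have hne : (Z \ A).Nonempty := by
    rw [← card_pos, card_sdiff_of_subset hAZ]
    omega
  refine ⟨(Z \ A).max' hne, max'_mem _ _, fun b => ?_⟩
  have hy := mem_sdiff.1 (max'_mem _ hne)
  rw [countBelow_insert hy.2]
  split_ifs with hyb
  · have hZA : ∀ z ∈ Z, b ≤ z.val → z.val < max b n → z ∈ A := fun z hz hbz _ =>
      by_contra fun hzA => (le_max' _ z (mem_sdiff.2 ⟨hz, hzA⟩)).not_gt (hyb.trans_le hbz)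
    have hb := countBelow_add_le_of_forall_mem (le_max_left b n) hZA
    rw [countBelow_eq_card _ (le_max_right b n), countBelow_eq_card _ (le_max_right b n)] at hb
    have := countBelow_le_add_card_sub hF b
    have := hZF b
    have := card_le_card hAZ
    have := card_le_card hF
    omega
  · exact hAF b

theorem dom_iff_countBelow (E F : Finset (Fin n)) :
    Dom E F ↔ #E = #F ∧ ∀ a : ℕ, countBelow F a ≤ countBelow E a := by
  rw [dom_iff_card_filter_lt]
  refine and_congr_right fun hcard => ⟨fun h a => ?_, fun h a => h a⟩
  by_cases ha : a < n
  · simpa [countBelow, Fin.lt_def] using h ⟨a, ha⟩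
  · rw [countBelow_eq_card _ (not_lt.1 ha), countBelow_eq_card _ (not_lt.1 ha), hcard]

end CountBelow

section InitSet

variable {n : ℕ}

theorem mem_initSet {w : Equiv.Perm (Fin n)} {i : ℕ} {x : Fin n} :
    x ∈ initSet w i ↔ ∃ j : Fin n, j.val < i ∧ w j = x := by
  simp [initSet]

theorem card_initSet (w : Equiv.Perm (Fin n)) {i : ℕ} (hi : i ≤ n) : #(initSet w i) = i := by
  rw [initSet, card_image_of_injective _ w.injective, Fin.card_filter_val_lt, min_eq_right hi]

theorem initSet_zero (w : Equiv.Perm (Fin n)) : initSet w 0 = ∅ := by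
  simp [initSet]

theorem initSet_self (w : Equiv.Perm (Fin n)) : initSet w n = univ :=
  eq_univ_of_forall fun x => mem_initSet.2 ⟨w.symm x, (w.symm x).isLt, w.apply_symm_apply x⟩

theorem initSet_mono (w : Equiv.Perm (Fin n)) {i j : ℕ} (h : i ≤ j) :
    initSet w i ⊆ initSet w j :=
  image_subset_image (monotone_filter_right _ fun _ _ hx => hx.trans_le h)

theorem apply_notMem_initSet (w : Equiv.Perm (Fin n)) (j : Fin n) : w j ∉ initSet w j := by
  rw [mem_initSet]
  rintro ⟨k, hk, hkj⟩
  exact hk.ne (congrArg Fin.val (w.injective hkj))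

theorem initSet_succ (w : Equiv.Perm (Fin n)) (j : Fin n) :
    initSet w (j + 1) = insert (w j) (initSet w j) := by
  ext x
  simp only [mem_insert, mem_initSet, Nat.lt_succ_iff_lt_or_eq, or_and_right, exists_or]
  rw [or_comm]
  exact or_congr_left ⟨fun ⟨k, hk, hkx⟩ => by rw [← Fin.ext hk, hkx], fun h => ⟨j, rfl, h.symm⟩⟩

theorem initSet_congr {v w : Equiv.Perm (Fin n)} {i : ℕ}
    (h : ∀ j : Fin n, j.val < i → v j = w j) : initSet v i = initSet w i :=
  image_congr fun j hj => h j (mem_filter.1 hj).2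

theorem eq_of_forall_initSet_eq {v w : Equiv.Perm (Fin n)}
    (h : ∀ i ≤ n, initSet v i = initSet w i) : v = w := by
  refine Equiv.ext fun j => ?_
  have hsucc : insert (v j) (initSet w j) = insert (w j) (initSet w j) := by
    rw [← initSet_succ w j, ← h _ j.isLt, initSet_succ v j, h j j.isLt.le]
  have hnot : v j ∉ initSet w j := h j j.isLt.le ▸ apply_notMem_initSet v j
  exact (mem_insert.1 (hsucc ▸ mem_insert_self _ _)).resolve_right hnot

theorem countBelow_initSet_succ (w : Equiv.Perm (Fin n)) (j : Fin n) (a : ℕ) :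
    countBelow (initSet w (j + 1)) a =
      countBelow (initSet w j) a + if (w j).val < a then 1 else 0 := by
  rw [initSet_succ, countBelow_insert (apply_notMem_initSet w j)]

theorem bruhat_iff_countBelow (v w : Equiv.Perm (Fin n)) :
    Bruhat v w ↔ ∀ i ≤ n, ∀ a, countBelow (initSet w i) a ≤ countBelow (initSet v i) a := by
  refine forall₂_congr fun i hi => ?_
  rw [dom_iff_countBelow, card_initSet v hi, card_initSet w hi]
  exact and_iff_right rfl

theorem bruhat_antisymm {v w : Equiv.Perm (Fin n)} (hvw : Bruhat v w) (hwv : Bruhat w v) :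
    v = w :=
  eq_of_forall_initSet_eq fun i hi => dom_antisymm (hvw i hi) (hwv i hi)

open Equiv in
theorem exists_perm_forall_initSet {P : ℕ → Finset (Fin n) → Prop} (h0 : P 0 ∅)
    (hstep : ∀ i < n, ∀ A, P i A → ∃ y ∉ A, P (i + 1) (insert y A)) :
    ∃ ξ : Perm (Fin n), ∀ i ≤ n, P i (initSet ξ i) := by
  suffices ∀ k ≤ n, ∃ ξ : Perm (Fin n), ∀ i ≤ k, P i (initSet ξ i) from this n le_rfl
  intro k hk
  induction k with
  | zero => exact ⟨1, fun i hi => by rw [Nat.le_zero.1 hi, initSet_zero]; exact h0⟩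
  | succ k ih =>
    obtain ⟨ξ, hξ⟩ := ih (by omega)
    obtain ⟨y, hy, hPy⟩ := hstep k (by omega) _ (hξ k le_rfl)
    let j : Fin n := ⟨k, by omega⟩
    have hfix : ∀ m : Fin n, m.val < k → (swap (ξ j) y * ξ) m = ξ m := fun m hm =>
      swap_apply_of_ne_of_ne (ξ.injective.ne (Fin.ne_of_lt hm))
        (fun h => hy (h ▸ mem_initSet.2 ⟨m, hm, rfl⟩))
    refine ⟨swap (ξ j) y * ξ, fun i hi => ?_⟩
    rcases hi.lt_or_eq with hi | rfl
    · rw [initSet_congr fun m hm => hfix m (hm.trans_le (by omega))]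
      exact hξ i (by omega)
    · have := initSet_succ (swap (ξ j) y * ξ) j
      rw [Perm.mul_apply, swap_apply_left, initSet_congr hfix] at this
      exact this ▸ hPy

end InitSet

section Admissible

variable {n p i : ℕ} {Y A C : Finset (Fin n)} {w : Equiv.Perm (Fin n)}

/-- The constraints on the level-`i` set `{v_1, …, v_i}` of a lift `v` of `Y` above `w`. -/
def Admissible (p : ℕ) (Y : Finset (Fin n)) (w : Equiv.Perm (Fin n)) (i : ℕ)
    (C : Finset (Fin n)) : Prop :=
  #C = i ∧ (i ≤ p → C ⊆ Y) ∧ (p ≤ i → Y ⊆ C) ∧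
    ∀ a, countBelow C a ≤ countBelow (initSet w i) a

/-- Least in the dominance order, i.e. with the largest counts. -/
def IsLeastAdmissible (p : ℕ) (Y : Finset (Fin n)) (w : Equiv.Perm (Fin n)) (i : ℕ)
    (A : Finset (Fin n)) : Prop :=
  Admissible p Y w i A ∧ ∀ C, Admissible p Y w i C → ∀ a, countBelow C a ≤ countBelow A a

theorem admissible_initSet_iff (hYc : #Y = p) (v : Equiv.Perm (Fin n)) :
    (initSet v p = Y ∧ Bruhat w v) ↔ ∀ i ≤ n, Admissible p Y w i (initSet v i) := by
  constructor
  · rintro ⟨hv, hwv⟩ i hi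
    exact ⟨card_initSet v hi, fun hip => hv ▸ initSet_mono v hip,
      fun hpi => hv ▸ initSet_mono v hpi, (bruhat_iff_countBelow w v).1 hwv i hi⟩
  · intro h
    have hpn : p ≤ n := by simpa [hYc] using card_le_univ Y
    obtain ⟨-, hsub, hsup, -⟩ := h p hpn
    exact ⟨(hsub le_rfl).antisymm (hsup le_rfl),
      (bruhat_iff_countBelow w v).2 fun i hi => (h i hi).2.2.2⟩

theorem isLeastAdmissible_zero (hYc : #Y = p) : IsLeastAdmissible p Y w 0 ∅ := by
  refine ⟨⟨card_empty, fun _ => empty_subset _, fun hp => ?_, fun a => by simp [countBelow]⟩,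
    fun C hC a => ?_⟩
  · rw [card_eq_zero.1 (hYc.trans (Nat.le_zero.1 hp))]
  · rw [card_eq_zero.1 hC.1]

theorem admissible_insert (hYc : #Y = p) (hA : Admissible p Y w i A) {y : Fin n} (hy : y ∉ A)
    (hyY : i < p → y ∈ Y)
    (hcount : ∀ a, countBelow (insert y A) a ≤ countBelow (initSet w (i + 1)) a) :
    Admissible p Y w (i + 1) (insert y A) := by
  obtain ⟨hcard, hAY, hYA, -⟩ := hA
  have hcard' : #(insert y A) = i + 1 := by rw [card_insert_of_notMem hy, hcard]
  have hsub : i + 1 ≤ p → insert y A ⊆ Y := fun h =>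
    insert_subset (hyY (by omega)) (hAY (by omega))
  refine ⟨hcard', hsub, fun hpi => ?_, hcount⟩
  rcases Nat.lt_or_ge i p with hip | hpi
  · rw [eq_of_subset_of_card_le (hsub (by omega)) (by omega)]
  · exact (hYA hpi).trans (subset_insert _ _)

theorem admissible_erase (hYc : #Y = p) (hC : Admissible p Y w (i + 1) C) {x : Fin n}
    (hx : x ∈ C) (hxY : p ≤ i → x ∉ Y)
    (hval : ∀ e, countBelow (initSet w i) e < countBelow C e → x.val < e) :
    Admissible p Y w i (C.erase x) := by
  obtain ⟨hcard, hCY, hYC, hCw⟩ := hC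
  have hin : i < n := by simpa [hcard] using card_le_univ C
  have hcard' : #(C.erase x) = i := by rw [card_erase_of_mem hx, hcard, Nat.add_sub_cancel]
  have hsup : p ≤ i → Y ⊆ C.erase x := fun hpi z hz =>
    mem_erase.2 ⟨fun h => hxY hpi (h ▸ hz), hYC (by omega) hz⟩
  refine ⟨hcard', fun hip => ?_, hsup, fun e => ?_⟩
  · rcases hip.lt_or_eq with hip | rfl
    · exact (erase_subset x C).trans (hCY hip)
    · exact (eq_of_subset_of_card_le (hsup le_rfl) (by omega)).symm.subset
  · have hsucc := countBelow_initSet_succ w ⟨i, hin⟩ e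
    have hCe := countBelow_erase hx e
    have := hCw e
    simp only at hsucc
    by_cases he : countBelow (initSet w i) e < countBelow C e
    · rw [if_pos (hval e he)] at hCe
      split_ifs at hsucc <;> omega
    · split_ifs at hCe hsucc <;> omega

theorem Admissible.exists_erase (hYc : #Y = p)
    (hY : ∀ a, countBelow Y a ≤ countBelow (initSet w p) a)
    (hC : Admissible p Y w (i + 1) C) : ∃ x ∈ C, Admissible p Y w i (C.erase x) := by
  have hin : i < n := by simpa [hC.1] using card_le_univ C
  have hex : ∃ e, countBelow (initSet w i) e < countBelow C e := ⟨n, by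
    rw [countBelow_eq_card _ le_rfl, countBelow_eq_card _ le_rfl, card_initSet w hin.le, hC.1]
    omega⟩
  -- any element (outside `Y` once `p ≤ i`) below the first threshold where `C` beats
  -- `initSet w i` can be deleted
  have hbelow : ∃ x ∈ C, (p ≤ i → x ∉ Y) ∧ x.val < Nat.find hex := by
    by_cases hpi : p ≤ i
    · have hYi := (hY _).trans (countBelow_mono (initSet_mono w hpi) (Nat.find hex))
      obtain ⟨x, hxC, hxY, hxa⟩ := exists_mem_sdiff_of_countBelow_lt
        (hYi.trans_lt (Nat.find_spec hex))
      exact ⟨x, hxC, fun _ => hxY, hxa⟩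
    · obtain ⟨x, hxC, -, hxa⟩ := exists_mem_sdiff_of_countBelow_lt (E := ∅)
        ((Nat.zero_le _).trans_lt (Nat.find_spec hex))
      exact ⟨x, hxC, fun h => absurd h hpi, hxa⟩
  obtain ⟨x, hxC, hxY, hxa⟩ := hbelow
  exact ⟨x, hxC, admissible_erase hYc hC hxC hxY fun e he =>
    hxa.trans_le (Nat.find_min' hex he)⟩

theorem IsLeastAdmissible.countBelow_le_add_one (hYc : #Y = p)
    (hY : ∀ a, countBelow Y a ≤ countBelow (initSet w p) a) (hA : IsLeastAdmissible p Y w i A)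
    (hC : Admissible p Y w (i + 1) C) (a : ℕ) : countBelow C a ≤ countBelow A a + 1 := by
  obtain ⟨x, hxC, hCx⟩ := hC.exists_erase hYc hY
  have := hA.2 _ hCx a
  have := countBelow_erase hxC a
  split_ifs at this <;> omega

theorem Admissible.exists_insert (hYc : #Y = p)
    (hY : ∀ a, countBelow Y a ≤ countBelow (initSet w p) a) (hi : i < n)
    (hA : Admissible p Y w i A) : ∃ y ∉ A, Admissible p Y w (i + 1) (insert y A) := by
  have hAw : ∀ a, countBelow A a ≤ countBelow (initSet w (i + 1)) a := fun a =>
    (hA.2.2.2 a).trans (countBelow_mono (initSet_mono w i.le_succ) a)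
  by_cases hip : i < p
  · have hpn : p ≤ n := by simpa [hYc] using card_le_univ Y
    obtain ⟨y, hy, hcount⟩ := exists_mem_sdiff_countBelow_insert_le (hA.2.1 hip.le)
      (initSet_mono w hip) hY hAw (by rw [card_initSet w hpn, card_initSet w hi, hYc, hA.1]; omega)
    exact ⟨y, (mem_sdiff.1 hy).2,
      admissible_insert hYc hA (mem_sdiff.1 hy).2 (fun _ => (mem_sdiff.1 hy).1) hcount⟩
  · obtain ⟨y, hy, hcount⟩ := exists_mem_sdiff_countBelow_insert_le (subset_univ A)
      (initSet_mono w hi) (fun a => by rw [initSet_self]) hAw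
      (by rw [card_initSet w le_rfl, card_initSet w hi, card_univ, Fintype.card_fin, hA.1]; omega)
    exact ⟨y, (mem_sdiff.1 hy).2,
      admissible_insert hYc hA (mem_sdiff.1 hy).2 (fun h => absurd h hip) hcount⟩

theorem IsLeastAdmissible.countBelow_lt_initSet_succ (hYc : #Y = p) (hi : i < n)
    (hA : IsLeastAdmissible p Y w i A) (hC : Admissible p Y w (i + 1) C) {a b : ℕ}
    (ha : countBelow A a < countBelow C a) (hab : a < b) :
    countBelow A b < countBelow (initSet w (i + 1)) b := by
  obtain ⟨⟨hAcard, -, hYA, hAw⟩, hmin⟩ := hA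
  have hAC : #A < #C := by rw [hAcard, hC.1]; omega
  by_contra! hb
  have hsucc := countBelow_initSet_succ w ⟨i, hi⟩ b
  simp only at hsucc
  have hwb : ¬ (w ⟨i, hi⟩).val < b := fun h => by
    rw [if_pos h] at hsucc
    have := hAw b
    omega
  have hCb : countBelow C b ≤ countBelow A b := (hC.2.2.2 b).trans hb
  set D := {z ∈ C \ A | b ≤ z.val}
  have hD : D.Nonempty := by
    obtain ⟨z, hzC, hzA, hbz⟩ := exists_mem_sdiff_le_of_countBelow_le hAC hCb
    exact ⟨z, by simp [D, hzC, hzA, hbz]⟩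
  -- deleting from `C` the least element of `C \ A` from `b` on leaves an admissible `i`-set
  -- that still beats `A` at `a`
  obtain ⟨⟨hxC, hxA⟩, hbx⟩ : (D.min' hD ∈ C ∧ D.min' hD ∉ A) ∧ b ≤ (D.min' hD).val := by
    simpa [D] using min'_mem D hD
  have hval : ∀ e, countBelow (initSet w i) e < countBelow C e → (D.min' hD).val < e := by
    intro e he
    have hsucc' := countBelow_initSet_succ w ⟨i, hi⟩ e
    simp only at hsucc'
    have hwe : (w ⟨i, hi⟩).val < e := by_contra fun h => by
      rw [if_neg h] at hsucc'
      have := hC.2.2.2 e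
      omega
    by_contra! hxe
    have := countBelow_add_le_of_forall_mem (C := C) (A := A) (a := e) (b := b) (by omega)
      fun z hz hbz hze => by_contra fun hzA =>
        (min'_le D z (by simp [D, hz, hzA, hbz])).not_gt (Fin.lt_def.2 (hze.trans_le hxe))
    have := hAw e
    omega
  have := hmin _ (admissible_erase hYc hC hxC (fun hpi hxY => hxA (hYA hpi hxY)) hval) a
  have := countBelow_erase hxC a
  rw [if_neg (by omega)] at this
  omega

theorem IsLeastAdmissible.exists_lt_admissible_insert (hYc : #Y = p) (hi : i < n)
    (hA : IsLeastAdmissible p Y w i A) (hC : Admissible p Y w (i + 1) C) {a : ℕ}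
    (ha : countBelow A a < countBelow C a) :
    ∃ y ∉ A, y.val < a ∧ Admissible p Y w (i + 1) (insert y A) := by
  set D := {z ∈ C \ A | z.val < a}
  have hD : D.Nonempty := by
    obtain ⟨z, hzC, hzA, hza⟩ := exists_mem_sdiff_of_countBelow_lt ha
    exact ⟨z, by simp [D, hzC, hzA, hza]⟩
  obtain ⟨⟨hyC, hyA⟩, hya⟩ : (D.max' hD ∈ C ∧ D.max' hD ∉ A) ∧ (D.max' hD).val < a := by
    simpa [D] using max'_mem D hD
  refine ⟨D.max' hD, hyA, hya,
    admissible_insert hYc hA.1 hyA (fun hip => hC.2.1 hip hyC) fun b => ?_⟩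
  rw [countBelow_insert hyA]
  split_ifs with hyb
  · rcases le_or_gt b a with hba | hab
    · have := countBelow_add_le_of_forall_mem (C := C) (A := A) hba
        fun z hz hbz hza => by_contra fun hzA =>
          (le_max' D z (by simp [D, hz, hzA, hza])).not_gt (Fin.lt_def.2 (hyb.trans_le hbz))
      have := hC.2.2.2 b
      omega
    · exact hA.countBelow_lt_initSet_succ hYc hi hC ha hab
  · exact (hA.1.2.2.2 b).trans (countBelow_mono (initSet_mono w i.le_succ) b)

theorem IsLeastAdmissible.exists_insert (hYc : #Y = p)
    (hY : ∀ a, countBelow Y a ≤ countBelow (initSet w p) a) (hi : i < n)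
    (hA : IsLeastAdmissible p Y w i A) :
    ∃ y ∉ A, IsLeastAdmissible p Y w (i + 1) (insert y A) := by
  classical
  set F := {y ∈ (univ : Finset (Fin n)) | y ∉ A ∧ Admissible p Y w (i + 1) (insert y A)}
  obtain ⟨y₀, hy₀A, hy₀⟩ := hA.1.exists_insert hYc hY hi
  have hF : F.Nonempty := ⟨y₀, by simp [F, hy₀A, hy₀]⟩
  obtain ⟨hyA, hy⟩ := (mem_filter.1 (min'_mem F hF)).2
  refine ⟨F.min' hF, hyA, hy, fun C hC a => ?_⟩
  by_cases hCa : countBelow C a ≤ countBelow A a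
  · exact hCa.trans (countBelow_mono (subset_insert _ _) a)
  · obtain ⟨y', hy'A, hy'a, hy'⟩ := hA.exists_lt_admissible_insert hYc hi hC (not_le.1 hCa)
    have hle : F.min' hF ≤ y' := min'_le F y' (by simp [F, hy'A, hy'])
    rw [countBelow_insert hyA, if_pos ((Fin.le_iff_val_le_val.1 hle).trans_lt hy'a)]
    exact hA.countBelow_le_add_one hYc hY hC a

theorem exists_perm_forall_isLeastAdmissible (hYc : #Y = p)
    (hY : ∀ a, countBelow Y a ≤ countBelow (initSet w p) a) :
    ∃ ξ : Equiv.Perm (Fin n), ∀ i ≤ n, IsLeastAdmissible p Y w i (initSet ξ i) :=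
  exists_perm_forall_initSet (isLeastAdmissible_zero hYc) fun _ hi _ hA =>
    hA.exists_insert hYc hY hi

end Admissible

theorem stmt13_general (n p : ℕ)
    (Y : Finset (Fin n)) (hYc : Y.card = p)
    (w : Equiv.Perm (Fin n)) (hdom : Dom (initSet w p) Y) :
    ∃! ξ : Equiv.Perm (Fin n),
      initSet ξ p = Y ∧ Bruhat w ξ ∧
      ∀ v : Equiv.Perm (Fin n), initSet v p = Y → Bruhat w v → Bruhat ξ v := by
  obtain ⟨ξ, hξ⟩ :=
    exists_perm_forall_isLeastAdmissible hYc ((dom_iff_countBelow _ _).1 hdom).2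
  have hmin : ∀ v, initSet v p = Y → Bruhat w v → Bruhat ξ v := fun v hv hwv =>
    (bruhat_iff_countBelow ξ v).2 fun i hi =>
      (hξ i hi).2 _ ((admissible_initSet_iff hYc v).1 ⟨hv, hwv⟩ i hi)
  obtain ⟨hξY, hwξ⟩ := (admissible_initSet_iff hYc ξ).2 fun i hi => (hξ i hi).1
  exact ⟨ξ, ⟨hξY, hwξ, hmin⟩, fun ξ' ⟨hξ'Y, hwξ', hmin'⟩ =>
    bruhat_antisymm (hmin' ξ hξY hwξ) (hmin ξ' hξ'Y hwξ')⟩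

theorem stmt13 (n p : ℕ) (hn : 1 ≤ n) (hp : p ≤ n)
    (Y : Finset (Fin n)) (hYc : Y.card = p)
    (w : Equiv.Perm (Fin n)) (hdom : Dom (initSet w p) Y) :
    ∃! ξ : Equiv.Perm (Fin n),
      initSet ξ p = Y ∧ Bruhat w ξ ∧
      ∀ v : Equiv.Perm (Fin n), initSet v p = Y → Bruhat w v → Bruhat ξ v :=
  stmt13_general n p Y hYc w hdom
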